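/- Let k ≥ 1, let S_1, …, S_k be strings over an alphabet Σ, let c be a symbol not in Σ, and let x ≥ 0 be an integer. Then the median edit distance is unchanged by appending the same block of x copies of c to every string: δ_E(S_1 · c^x, S_2 · c^x, …, S_k · c^x) = δ_E(S_1, …, S_k). -/

import Mathlib

/-!
Appending a common suffix never increases an edit distance, so a candidate median `T` for the
`Sᵢ` gives the candidate `T · c^x` of no larger total cost for the `Sᵢ · c^x`. Conversely, erasing
every `c` from a candidate `T` for the `Sᵢ · c^x` gives a candidate for the `Sᵢ` of no larger cost:
since `c` does not occur in `Sᵢ`, an alignment of `Sᵢ · c^x` with `T` pays, inside the block `c^x`,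
once for every letter of `T` other than `c` it places there, which covers inserting that letter
into `Sᵢ`; the letters `c` of `T` are free to drop.
-/

/-- The costs of the Levenshtein edit operations (formerly in Mathlib). -/
structure Levenshtein.Cost (α β δ : Type*) where
  /-- Cost to delete an element from a list. -/
  delete : α → δ
  /-- Cost in insert an element into a list. -/
  insert : β → δ
  /-- Cost to substitute one element for another in a list. -/
  substitute : α → β → δ

/-- The default cost structure, with cost 1 for every operation (formerly in Mathlib). -/
def Levenshtein.defaultCost {α : Type*} [DecidableEq α] : Levenshtein.Cost α α ℕ where
  delete _ := 1
  insert _ := 1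
  substitute a b := if a = b then 0 else 1

/-- Auxiliary step of the Levenshtein algorithm (formerly in Mathlib). -/
def Levenshtein.impl {α β δ : Type*} [AddZeroClass δ] [Min δ]
    (C : Levenshtein.Cost α β δ) (xs : List α) (y : β)
    (d : {r : List δ // 0 < r.length}) : {r : List δ // 0 < r.length} :=
  let ⟨ds, w⟩ := d
  xs.zip (ds.zip ds.tail) |>.foldr
    (init := ⟨[C.insert y + ds.getLast (List.ne_nil_of_length_pos w)], by simp⟩)
    (fun ⟨x, d₀, d₁⟩ ⟨r, w⟩ =>
      ⟨min (C.delete x + r[0]) (min (C.insert y + d₀) (C.substitute x y + d₁)) :: r, by simp⟩)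

/-- Edit distances of `xs` to all suffixes of `ys` (formerly in Mathlib). -/
def suffixLevenshtein {α β δ : Type*} [AddZeroClass δ] [Min δ]
    (C : Levenshtein.Cost α β δ) (xs : List α) (ys : List β) :
    {r : List δ // 0 < r.length} :=
  ys.foldr
    (Levenshtein.impl C xs)
    (xs.foldr (init := ⟨[0], by simp⟩) (fun a ⟨ds, w⟩ => ⟨(C.delete a + ds[0]) :: ds, by simp⟩))

/-- The Levenshtein distance with cost structure `C` (formerly in Mathlib). -/
def levenshtein {α β δ : Type*} [AddZeroClass δ] [Min δ]
    (C : Levenshtein.Cost α β δ) (xs : List α) (ys : List β) : δ :=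
  let ⟨r, w⟩ := suffixLevenshtein C xs ys
  r[0]

/-- The Levenshtein edit distance between two strings. -/
def editDist {α : Type*} [DecidableEq α] (s t : List α) : ℕ :=
  levenshtein Levenshtein.defaultCost s t

/-- The median edit distance of a family of strings. -/
noncomputable def medianED {α : Type*} [DecidableEq α] (L : List (List α)) : ℕ :=
  sInf { d : ℕ | ∃ T : List α, d = (L.map fun s => editDist s T).sum }

namespace Levenshtein

variable {α β δ : Type*} [AddZeroClass δ] [Min δ] (C : Cost α β δ)

theorem impl_cons (x : α) (xs : List α) (y : β) (d : δ) (ds : List δ) (w : 0 < (d :: ds).length)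
    (w' : 0 < ds.length) :
    impl C (x :: xs) y ⟨d :: ds, w⟩ =
      let ⟨r, w⟩ := impl C xs y ⟨ds, w'⟩
      ⟨min (C.delete x + r[0]) (min (C.insert y + d) (C.substitute x y + ds[0])) :: r, by simp⟩ :=
  match ds, w' with | _ :: _, _ => rfl

theorem impl_cons_fst_zero (x : α) (xs : List α) (y : β) (d : δ) (ds : List δ)
    (w : 0 < (d :: ds).length) (h) (w' : 0 < ds.length) :
    (impl C (x :: xs) y ⟨d :: ds, w⟩).1[0]'h =
      let ⟨r, w⟩ := impl C xs y ⟨ds, w'⟩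
      min (C.delete x + r[0]) (min (C.insert y + d) (C.substitute x y + ds[0])) :=
  match ds, w' with | _ :: _, _ => rfl

theorem impl_length (xs : List α) (y : β) (d : {r : List δ // 0 < r.length})
    (w : d.1.length = xs.length + 1) :
    (impl C xs y d).1.length = xs.length + 1 := by
  induction xs generalizing d with
  | nil => rfl
  | cons x xs ih =>
    match d, w with
    | ⟨d₁ :: d₂ :: ds, _⟩, w =>
      dsimp [impl]
      congr 1
      exact ih ⟨d₂ :: ds, by simp⟩ (by simpa using w)

end Levenshtein

open Levenshtein

section

variable {α β δ : Type*} [AddZeroClass δ] [Min δ] (C : Levenshtein.Cost α β δ)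

theorem suffixLevenshtein_length (xs : List α) (ys : List β) :
    (suffixLevenshtein C xs ys).1.length = xs.length + 1 := by
  induction ys with
  | nil =>
    induction xs with
    | nil => rfl
    | cons _ xs ih => simp_all [suffixLevenshtein]
  | cons y ys ih => exact impl_length C xs y _ ih

theorem suffixLevenshtein_cons₁ (x : α) (xs : List α) (ys : List β) :
    suffixLevenshtein C (x :: xs) ys =
      ⟨levenshtein C (x :: xs) ys :: (suffixLevenshtein C xs ys).1, by simp⟩ := by
  induction ys with
  | nil => rfl
  | cons y ys ih =>
    have hlen : 0 < (suffixLevenshtein C xs ys).1.length := by simp [suffixLevenshtein_length]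
    have ext : ∀ {u v : {r : List δ // 0 < r.length}},
        u.1[0]'u.2 = v.1[0]'v.2 → u.1.tail = v.1.tail → u = v := by
      rintro ⟨_ | ⟨a, u⟩, hu⟩ ⟨_ | ⟨b, v⟩, hv⟩ h₀ h <;> first | cases hu | cases hv | simp_all
    refine ext rfl ?_
    show (impl C (x :: xs) y (suffixLevenshtein C (x :: xs) ys)).1.tail = _
    rw [ih, impl_cons C x xs y _ _ _ hlen]
    rfl

theorem levenshtein_nil_cons (y : β) (ys : List β) :
    levenshtein C ([] : List α) (y :: ys) = C.insert y + levenshtein C [] ys := by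
  have key : ∀ d : {r : List δ // 0 < r.length}, d.1.length = 1 →
      ∀ h, (impl C [] y d).1[0]'h = C.insert y + d.1[0]'d.2 := by
    rintro ⟨_ | ⟨a, _ | _⟩, w⟩ hl h <;> first | rfl | simp at hl
  exact key _ (suffixLevenshtein_length C [] ys) _

theorem levenshtein_cons_nil (x : α) (xs : List α) :
    levenshtein C (x :: xs) ([] : List β) = C.delete x + levenshtein C xs [] :=
  rfl

theorem levenshtein_cons_cons (x : α) (xs : List α) (y : β) (ys : List β) :
    levenshtein C (x :: xs) (y :: ys) =
      min (C.delete x + levenshtein C xs (y :: ys))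
        (min (C.insert y + levenshtein C (x :: xs) ys)
          (C.substitute x y + levenshtein C xs ys)) := by
  have hlen : 0 < (suffixLevenshtein C xs ys).1.length := by simp [suffixLevenshtein_length]
  show (impl C (x :: xs) y (suffixLevenshtein C (x :: xs) ys)).1[0]'_ = _
  simp only [suffixLevenshtein_cons₁]
  rw [impl_cons_fst_zero C x xs y _ _ _ _ hlen]
  rfl

end

section

variable {α : Type*} [DecidableEq α]

@[simp] theorem editDist_nil_left (t : List α) : editDist [] t = t.length := by
  induction t with
  | nil => rfl
  | cons b t ih =>
    rw [editDist, levenshtein_nil_cons, ← editDist, ih, List.length_cons, add_comm]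
    rfl

@[simp] theorem editDist_nil_right (s : List α) : editDist s [] = s.length := by
  induction s with
  | nil => rfl
  | cons a s ih =>
    rw [editDist, levenshtein_cons_nil, ← editDist, ih, List.length_cons, add_comm]
    rfl

theorem editDist_cons_cons (a : α) (s : List α) (b : α) (t : List α) :
    editDist (a :: s) (b :: t) =
      min (1 + editDist s (b :: t))
        (min (1 + editDist (a :: s) t) ((if a = b then 0 else 1) + editDist s t)) :=
  levenshtein_cons_cons ..

theorem editDist_cons_left_le (a : α) (s t : List α) : editDist (a :: s) t ≤ 1 + editDist s t := by
  cases t with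
  | nil => simp [add_comm]
  | cons b t => exact (editDist_cons_cons a s b t).le.trans (min_le_left _ _)

theorem editDist_cons_right_le (s : List α) (b : α) (t : List α) :
    editDist s (b :: t) ≤ 1 + editDist s t := by
  cases s with
  | nil => simp [add_comm]
  | cons a s =>
    exact (editDist_cons_cons a s b t).le.trans ((min_le_right _ _).trans (min_le_left _ _))

theorem editDist_cons_cons_le (a : α) (s : List α) (b : α) (t : List α) :
    editDist (a :: s) (b :: t) ≤ (if a = b then 0 else 1) + editDist s t :=
  (editDist_cons_cons a s b t).le.trans ((min_le_right _ _).trans (min_le_right _ _))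

@[simp] theorem editDist_self (s : List α) : editDist s s = 0 := by
  induction s with
  | nil => rfl
  | cons a s ih => simpa [ih] using editDist_cons_cons_le a s a s

theorem editDist_append_right_le (s t r : List α) : editDist (s ++ r) (t ++ r) ≤ editDist s t := by
  induction s generalizing t with
  | nil =>
    induction t with
    | nil => simp
    | cons b t ih =>
      calc editDist r (b :: (t ++ r)) ≤ 1 + editDist r (t ++ r) := editDist_cons_right_le ..
        _ ≤ editDist [] (b :: t) := by simp at ih ⊢; omega
  | cons a s ihs =>
    induction t with
    | nil =>
      calc editDist (a :: (s ++ r)) r ≤ 1 + editDist (s ++ r) r := editDist_cons_left_le ..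
        _ ≤ editDist (a :: s) [] := by have := ihs []; simp at this ⊢; omega
    | cons b t iht =>
      show editDist (a :: (s ++ r)) (b :: (t ++ r)) ≤ _
      rw [editDist_cons_cons, editDist_cons_cons]
      gcongr min (1 + ?_) (min (1 + ?_) (_ + ?_))
      exacts [ihs (b :: t), iht, ihs t]

theorem List.filter_ne_cons_self (c : α) (t : List α) :
    (c :: t).filter (· ≠ c) = t.filter (· ≠ c) := by
  simp

theorem List.filter_ne_cons_of_ne {b c : α} (h : b ≠ c) (t : List α) :
    (b :: t).filter (· ≠ c) = b :: t.filter (· ≠ c) := by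
  simp [h]

theorem length_filter_ne_le_editDist_replicate (c : α) (x : ℕ) (t : List α) :
    (t.filter (· ≠ c)).length ≤ editDist (List.replicate x c) t := by
  induction t generalizing x with
  | nil => simp
  | cons b t iht =>
    induction x with
    | zero => exact (List.length_filter_le _ _).trans_eq (editDist_nil_left _).symm
    | succ x ihx =>
      rw [List.replicate_succ, editDist_cons_cons]
      have hins := iht (x + 1)
      have hsub := iht x
      rw [List.replicate_succ] at hins
      refine le_min (by omega) (le_min ?_ ?_)
      · rcases eq_or_ne b c with rfl | hb
        · rw [List.filter_ne_cons_self]; omega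
        · rw [List.filter_ne_cons_of_ne hb, List.length_cons]; omega
      · rcases eq_or_ne b c with rfl | hb
        · rw [List.filter_ne_cons_self]; omega
        · rw [List.filter_ne_cons_of_ne hb, List.length_cons, if_neg hb.symm]; omega

theorem editDist_filter_ne_le_append_replicate {c : α} {s : List α} (hs : c ∉ s) (x : ℕ)
    (t : List α) : editDist s (t.filter (· ≠ c)) ≤ editDist (s ++ List.replicate x c) t := by
  induction s generalizing t with
  | nil => simpa using length_filter_ne_le_editDist_replicate c x t
  | cons a s ihs =>
    obtain ⟨hac, hcs⟩ : a ≠ c ∧ c ∉ s := by simpa [eq_comm] using hs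
    induction t with
    | nil => simp
    | cons b t iht =>
      rw [List.cons_append, editDist_cons_cons]
      rw [List.cons_append] at iht
      have hdel := (editDist_cons_left_le a s _).trans (Nat.add_le_add_left (ihs hcs (b :: t)) 1)
      have hsub := ihs hcs t
      refine le_min hdel (le_min ?_ ?_)
      · rcases eq_or_ne b c with rfl | hb
        · rw [List.filter_ne_cons_self]; omega
        · rw [List.filter_ne_cons_of_ne hb]
          exact (editDist_cons_right_le _ _ _).trans (Nat.add_le_add_left iht 1)
      · rcases eq_or_ne b c with rfl | hb
        · rw [List.filter_ne_cons_self, if_neg hac]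
          exact (editDist_cons_left_le a s _).trans (Nat.add_le_add_left hsub 1)
        · rw [List.filter_ne_cons_of_ne hb]
          exact (editDist_cons_cons_le a s b _).trans (Nat.add_le_add_left hsub _)

theorem medianED_le (L : List (List α)) (T : List α) :
    medianED L ≤ (L.map fun s => editDist s T).sum :=
  Nat.sInf_le ⟨T, rfl⟩

theorem exists_medianED_eq (L : List (List α)) :
    ∃ T : List α, medianED L = (L.map fun s => editDist s T).sum :=
  Nat.sInf_mem (s := {d | ∃ T : List α, d = (L.map fun s => editDist s T).sum}) ⟨_, [], rfl⟩

theorem medianED_ofFn_le_of_forall_exists {k : ℕ} {f g : Fin k → List α}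
    (h : ∀ T, ∃ T', ∀ i, editDist (f i) T' ≤ editDist (g i) T) :
    medianED (List.ofFn f) ≤ medianED (List.ofFn g) := by
  obtain ⟨T, hT⟩ := exists_medianED_eq (List.ofFn g)
  obtain ⟨T', hT'⟩ := h T
  calc medianED (List.ofFn f) ≤ ∑ i, editDist (f i) T' := by
        simpa [List.sum_ofFn] using medianED_le (List.ofFn f) T'
    _ ≤ ∑ i, editDist (g i) T := Finset.sum_le_sum fun i _ => hT' i
    _ = medianED (List.ofFn g) := by simp [hT, List.sum_ofFn]

end

theorem median_append_fresh_block_general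
    {β : Type*} [DecidableEq β] (k : ℕ)
    (Sig : Set β) (S : Fin k → List β) (hS : ∀ i, ∀ ch ∈ S i, ch ∈ Sig)
    (c : β) (hc : c ∉ Sig) (x : ℕ) :
    medianED (List.ofFn fun i => S i ++ List.replicate x c) =
      medianED (List.ofFn S) := by
  have hcS : ∀ i, c ∉ S i := fun i h => hc (hS i c h)
  refine le_antisymm ?_ ?_
  · exact medianED_ofFn_le_of_forall_exists fun T =>
      ⟨T ++ List.replicate x c, fun i => editDist_append_right_le _ _ _⟩
  · exact medianED_ofFn_le_of_forall_exists fun T =>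
      ⟨T.filter (· ≠ c), fun i => editDist_filter_ne_le_append_replicate (hcS i) x T⟩

/-- For `k ≥ 1` strings `S₁, …, S_k` over `Σ`, a symbol `c ∉ Σ`, and
`x ≥ 0`, appending the block `c^x` to every string leaves the median edit distance
unchanged: `δ_E(S₁·c^x, …, S_k·c^x) = δ_E(S₁, …, S_k)`. -/
theorem median_append_fresh_block
    {β : Type*} [DecidableEq β] (k : ℕ) (hk : 1 ≤ k)
    (Sig : Set β) (S : Fin k → List β) (hS : ∀ i, ∀ ch ∈ S i, ch ∈ Sig)
    (c : β) (hc : c ∉ Sig) (x : ℕ) :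
    medianED (List.ofFn fun i => S i ++ List.replicate x c) =
      medianED (List.ofFn S) :=
  median_append_fresh_block_general k Sig S hS c hc x
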